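/- arXiv:1608.04460 — 8 statements merged into one kernel-verified Lean document; each statement's English description precedes it below -/
import Mathlib

section
/- Let G be a compact topological group acting continuously on a nonempty compact metrizable topological space X. Then there exists exactly one G-invariant Borel probability measure on X if and only if the action is transitive, i.e. for every x, y ∈ X there exists g ∈ G with g • x = y. -/
/-! Averaging a point over the Haar probability measure `η` of `G` gives the invariant
orbit measure `η.map (· • x)`, carried by the orbit of `x`. If the invariant measure is
unique, the orbit measures of any two points agree, so their orbits meet and the action
is transitive. Conversely, averaging the invariance of `μ` over `G` and swapping integrals
writes any invariant `μ` as the `μ`-average of the orbit measures; right invariance of `η`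
makes the orbit measure constant along orbits, so under transitivity this average is a
single orbit measure. -/

open MeasureTheory Measure MulAction Set

section OrbitMeasure

variable {G X : Type*} [Group G] [MeasurableSpace G] [MeasurableSpace X] [MulAction G X]

noncomputable def orbitMeasure (η : Measure G) (x : X) : Measure X :=
  η.map (· • x)

variable [MeasurableSMul G X] (η : Measure G)

instance [IsProbabilityMeasure η] (x : X) : IsProbabilityMeasure (orbitMeasure η x) :=
  isProbabilityMeasure_map (measurable_smul_const x).aemeasurable

theorem orbitMeasure_apply (x : X) {s : Set X} (hs : MeasurableSet s) :
    orbitMeasure η x s = η ((· • x) ⁻¹' s) :=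
  map_apply (measurable_smul_const x) hs

theorem map_smul_orbitMeasure [MeasurableMul G] [η.IsMulLeftInvariant] (g : G) (x : X) :
    (orbitMeasure η x).map (g • ·) = orbitMeasure η x := by
  have hcomp : (g • ·) ∘ (· • x) = (· • x) ∘ (g * ·) := funext fun h => (mul_smul g h x).symm
  rw [orbitMeasure, map_map (measurable_const_smul g) (measurable_smul_const x), hcomp,
    ← map_map (measurable_smul_const x) (measurable_const_mul g), map_mul_left_eq_self]

theorem orbitMeasure_smul [MeasurableMul G] [η.IsMulRightInvariant] (g : G) (x : X) :
    orbitMeasure η (g • x) = orbitMeasure η x := by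
  have hcomp : (· • g • x) = (· • x) ∘ (· * g) := funext fun h => (mul_smul h g x).symm
  rw [orbitMeasure, hcomp, ← map_map (measurable_smul_const x) (measurable_mul_const g),
    map_mul_right_eq_self]
  rfl

theorem mem_orbit_of_orbitMeasure_eq [NeZero η] {x y : X} (hx : MeasurableSet (orbit G x))
    (h : orbitMeasure η x = orbitMeasure η y) : y ∈ orbit G x := by
  by_contra hy
  have hx_full : (· • x) ⁻¹' orbit G x = univ := eq_univ_of_forall (mem_orbit x)
  have hy_null : (· • y) ⁻¹' orbit G x = ∅ :=
    eq_empty_of_forall_notMem fun g hg =>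
      hy (by rwa [mem_preimage, mem_orbit_symm, orbit_smul, mem_orbit_symm] at hg)
  have hxy := congrArg (· (orbit G x)) h
  simp only [orbitMeasure_apply η _ hx, hx_full, hy_null, measure_empty] at hxy
  exact measure_univ_ne_zero.mpr (NeZero.ne η) hxy

theorem measure_eq_lintegral_orbitMeasure [MeasurableSMul₂ G X] [IsProbabilityMeasure η]
    {μ : Measure X} [SFinite μ] (hμ : ∀ g : G, μ.map (g • ·) = μ) {s : Set X}
    (hs : MeasurableSet s) : μ s = ∫⁻ x, orbitMeasure η x s ∂μ := by
  have hind : Measurable fun p : G × X => s.indicator (1 : X → ENNReal) (p.1 • p.2) :=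
    (measurable_one.indicator hs).comp measurable_smul
  calc μ s = ∫⁻ g, μ ((g • ·) ⁻¹' s) ∂η := by
        simp_rw [← map_apply (measurable_const_smul _) hs, hμ, lintegral_const, measure_univ,
          mul_one]
    _ = ∫⁻ g, ∫⁻ x, s.indicator 1 (g • x) ∂μ ∂η := by
        simp_rw [← lintegral_indicator_one (hs.preimage (measurable_const_smul _)),
          ← indicator_comp_right]
        rfl
    _ = ∫⁻ x, ∫⁻ g, s.indicator 1 (g • x) ∂η ∂μ := lintegral_lintegral_swap hind.aemeasurable
    _ = ∫⁻ x, orbitMeasure η x s ∂μ := by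
        simp_rw [orbitMeasure_apply η _ hs,
          ← lintegral_indicator_one (hs.preimage (measurable_smul_const _)),
          ← indicator_comp_right]
        rfl

theorem eq_orbitMeasure_of_isPretransitive [IsPretransitive G X] [MeasurableSMul₂ G X]
    [MeasurableMul G] [IsProbabilityMeasure η] [η.IsMulRightInvariant] {μ : Measure X}
    [IsProbabilityMeasure μ] (hμ : ∀ g : G, μ.map (g • ·) = μ) (x : X) :
    μ = orbitMeasure η x := by
  have hconst : ∀ y, orbitMeasure η y = orbitMeasure η x := fun y => by
    obtain ⟨g, rfl⟩ := exists_smul_eq G x y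
    exact orbitMeasure_smul η g x
  ext s hs
  simp [measure_eq_lintegral_orbitMeasure η hμ hs, hconst]

end OrbitMeasure

theorem IsHaarMeasure.isMulRightInvariant_of_isProbabilityMeasure {G : Type*} [Group G]
    [TopologicalSpace G] [IsTopologicalGroup G] [LocallyCompactSpace G] [MeasurableSpace G]
    [BorelSpace G] (η : Measure G) [η.IsHaarMeasure] [IsProbabilityMeasure η] :
    η.IsMulRightInvariant :=
  ⟨fun g =>
    have := isProbabilityMeasure_map (μ := η) (measurable_mul_const g).aemeasurable
    isHaarMeasure_eq_of_isProbabilityMeasure _ _⟩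

/-- Let `G` be a compact topological group acting continuously on a
nonempty compact metrizable topological space `X`. Then there exists exactly one
`G`-invariant Borel probability measure on `X` if and only if the action is transitive. -/
theorem unique_invariant_probabilityMeasure_iff_transitive
    {G : Type*} [Group G] [TopologicalSpace G] [IsTopologicalGroup G] [CompactSpace G]
    {X : Type*} [TopologicalSpace X] [CompactSpace X] [TopologicalSpace.MetrizableSpace X]
    [Nonempty X] [MeasurableSpace X] [BorelSpace X]
    [MulAction G X] [ContinuousSMul G X] :
    (∃! μ : Measure X, IsProbabilityMeasure μ ∧
        ∀ g : G, Measure.map (fun x => g • x) μ = μ) ↔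
      ∀ x y : X, ∃ g : G, g • x = y := by
  borelize G
  let η := haarMeasure (⊤ : TopologicalSpace.PositiveCompacts G)
  have : IsProbabilityMeasure η := ⟨by
    rw [← TopologicalSpace.PositiveCompacts.coe_top (α := G)]; exact haarMeasure_self⟩
  have := IsHaarMeasure.isMulRightInvariant_of_isProbabilityMeasure η
  constructor
  · rintro ⟨μ, -, huniq⟩ x y
    have horbit : MeasurableSet (orbit G x) :=
      (isCompact_range (continuous_id.smul continuous_const)).isClosed.measurableSet
    exact mem_orbit_of_orbitMeasure_eq η horbit <|
      (huniq _ ⟨inferInstance, (map_smul_orbitMeasure η · x)⟩).trans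
        (huniq _ ⟨inferInstance, (map_smul_orbitMeasure η · y)⟩).symm
  · intro htrans
    have : IsPretransitive G X := ⟨htrans⟩
    obtain ⟨x⟩ := ‹Nonempty X›
    exact ⟨orbitMeasure η x, ⟨inferInstance, (map_smul_orbitMeasure η · x)⟩,
      fun μ ⟨_, hμ⟩ => eq_orbitMeasure_of_isPretransitive η hμ x⟩
end

section
/- Let d, n ≥ 1 and let V₁, …, V_n be d × d complex unitary matrices. Define U as a matrix indexed by (Fin d) × (Fin n) with entries U (i,k) (j,l) = (V_k) i j if k = l and 0 otherwise (the control-unitary Σₖ Vₖ ⊗ |k⟩⟨k|). Then U is unitary, and for every d × d complex matrix ρ the partial trace over the second factor of U (ρ ⊗ (1/n) • 1ₙ) U* equals the random unitary channel output (1/n) Σₖ Vₖ ρ Vₖ*; explicitly, for all i, j: Σₖ (U * (ρ ⊗ ((1/n : ℂ) • 1ₙ)) * U*) (i,k) (j,k) = ((1/n) Σₖ Vₖ ρ Vₖ*) i j. -/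
open Matrix
open scoped Kronecker

/-! The control-unitary is the block-diagonal matrix `blockDiagonal V`, and `ρ ⊗ 1ₙ` is
block-diagonal with every block equal to `ρ`. Conjugation therefore acts block by block, giving
the blocks `Vₖ ρ Vₖ*`, and the partial trace over the control register is the sum of the
diagonal blocks. -/

namespace Matrix

variable {m o α : Type*}

theorem blockDiagonal_mem_unitaryGroup [Fintype m] [DecidableEq m] [Fintype o] [DecidableEq o]
    [CommRing α] [StarRing α] {M : o → Matrix m m α} (hM : ∀ k, M k ∈ unitaryGroup m α) :
    blockDiagonal M ∈ unitaryGroup (m × o) α := by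
  rw [mem_unitaryGroup_iff, star_eq_conjTranspose, blockDiagonal_conjTranspose,
    ← blockDiagonal_mul, ← blockDiagonal_one]
  exact congrArg blockDiagonal (funext fun k => mem_unitaryGroup_iff.mp (hM k))

theorem blockDiagonal_mul_blockDiagonal_const_mul_conjTranspose [Fintype m] [Fintype o]
    [DecidableEq o] [NonUnitalSemiring α] [StarRing α] (M : o → Matrix m m α)
    (A : Matrix m m α) :
    blockDiagonal M * blockDiagonal (fun _ => A) * (blockDiagonal M)ᴴ
      = blockDiagonal fun k => M k * A * (M k)ᴴ := by
  rw [blockDiagonal_conjTranspose, ← blockDiagonal_mul, ← blockDiagonal_mul]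

theorem sum_blockDiagonal_apply_diag [Fintype o] [DecidableEq o] [AddCommMonoid α]
    (M : o → Matrix m m α) (i j : m) :
    ∑ k, blockDiagonal M (i, k) (j, k) = (∑ k, M k) i j := by
  simp only [blockDiagonal_apply_eq, sum_apply]

end Matrix

theorem control_unitary_realizes_random_unitary_channel_general
    (d n : ℕ)
    (V : Fin n → Matrix (Fin d) (Fin d) ℂ)
    (hV : ∀ k, V k ∈ Matrix.unitaryGroup (Fin d) ℂ) :
    ∀ U : Matrix (Fin d × Fin n) (Fin d × Fin n) ℂ,
      (∀ (i j : Fin d) (k l : Fin n),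
          U (i, k) (j, l) = if k = l then V k i j else 0) →
      U ∈ Matrix.unitaryGroup (Fin d × Fin n) ℂ ∧
      ∀ (ρ : Matrix (Fin d) (Fin d) ℂ) (i j : Fin d),
        (∑ k : Fin n,
            (U * (ρ ⊗ₖ ((1 / (n : ℂ)) • (1 : Matrix (Fin n) (Fin n) ℂ))) * Uᴴ) (i, k) (j, k))
          = ((1 / (n : ℂ)) • ∑ k : Fin n, V k * ρ * (V k)ᴴ) i j := by
  intro U hU
  obtain rfl : U = blockDiagonal V := ext fun ⟨i, k⟩ ⟨j, l⟩ => hU i j k l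
  refine ⟨blockDiagonal_mem_unitaryGroup hV, fun ρ i j => ?_⟩
  rw [kronecker_smul, kronecker_one, mul_smul_comm, smul_mul_assoc,
    blockDiagonal_mul_blockDiagonal_const_mul_conjTranspose, ← blockDiagonal_smul,
    sum_blockDiagonal_apply_diag, Finset.smul_sum]
  rfl

/-- Given unitaries `V₁, …, Vₙ` on `ℂᵈ`, the control-unitary
`U = Σₖ Vₖ ⊗ |k⟩⟨k|` (with entries `U (i,k) (j,l) = (Vₖ) i j` if `k = l` and `0` otherwise)
is unitary, and for every `d × d` matrix `ρ` the partial trace over the second factor of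
`U (ρ ⊗ (1/n) 1ₙ) U*` equals the random unitary channel output `(1/n) Σₖ Vₖ ρ Vₖ*`. -/
theorem control_unitary_realizes_random_unitary_channel
    (d n : ℕ) (hd : 1 ≤ d) (hn : 1 ≤ n)
    (V : Fin n → Matrix (Fin d) (Fin d) ℂ)
    (hV : ∀ k, V k ∈ Matrix.unitaryGroup (Fin d) ℂ) :
    ∀ U : Matrix (Fin d × Fin n) (Fin d × Fin n) ℂ,
      (∀ (i j : Fin d) (k l : Fin n),
          U (i, k) (j, l) = if k = l then V k i j else 0) →
      U ∈ Matrix.unitaryGroup (Fin d × Fin n) ℂ ∧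
      ∀ (ρ : Matrix (Fin d) (Fin d) ℂ) (i j : Fin d),
        (∑ k : Fin n,
            (U * (ρ ⊗ₖ ((1 / (n : ℂ)) • (1 : Matrix (Fin n) (Fin n) ℂ))) * Uᴴ) (i, k) (j, k))
          = ((1 / (n : ℂ)) • ∑ k : Fin n, V k * ρ * (V k)ᴴ) i j :=
  control_unitary_realizes_random_unitary_channel_general d n V hV
end

section
/- Let Φ be a ℂ-linear map on d × d complex matrices that is positive (it maps positive semidefinite matrices to positive semidefinite matrices), trace-preserving (trace(Φ(M)) = trace(M) for all M), and unital (Φ(1) = 1). Let p, q : Fin d → ℝ be such that Φ applied to the diagonal matrix with diagonal p equals the diagonal matrix with diagonal q (entries coerced into ℂ). Then there exists a d × d doubly stochastic real matrix D such that q = D *ᵥ p, i.e. qᵢ = Σⱼ Dᵢⱼ pⱼ for all i. -/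
open Matrix
open scoped ComplexOrder

/-- A real square matrix is doubly stochastic if it has nonnegative entries and all its
row sums and column sums equal `1`. -/
def IsDoublyStochastic {d : ℕ} (D : Matrix (Fin d) (Fin d) ℝ) : Prop :=
  (∀ i j, 0 ≤ D i j) ∧ (∀ i, ∑ j, D i j = 1) ∧ (∀ j, ∑ i, D i j = 1)

/-! Writing `E j` for the matrix unit `single j j 1`, take `D i j` to be the `i`-th diagonal
entry of `Φ (E j)`. Positivity of `Φ` makes it nonnegative, `Φ 1 = 1` with `1 = ∑ j, E j` makes
the rows sum to `1`, trace preservation with `trace (E j) = 1` makes the columns sum to `1`,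
and linearity applied to `diagonal p = ∑ j, p j • E j` gives `q = D *ᵥ p`. -/

namespace Matrix

variable {n : Type*} [DecidableEq n]

lemma posSemidef_single_self_one (j : n) : (single j j (1 : ℂ)).PosSemidef := by
  rw [← diagonal_single]
  exact PosSemidef.diagonal (Pi.single_nonneg.mpr zero_le_one)

def diagTransition (Φ : Matrix n n ℂ →ₗ[ℂ] Matrix n n ℂ) : Matrix n n ℝ :=
  fun i j => (Φ (single j j 1) i i).re

lemma diagTransition_nonneg {Φ : Matrix n n ℂ →ₗ[ℂ] Matrix n n ℂ}
    (hpos : ∀ M : Matrix n n ℂ, M.PosSemidef → (Φ M).PosSemidef) (i j : n) :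
    0 ≤ diagTransition Φ i j :=
  Complex.nonneg_iff.mp (hpos _ (posSemidef_single_self_one j)).diag_nonneg |>.1

variable [Fintype n]

lemma linearMap_diagonal_apply_self (Φ : Matrix n n ℂ →ₗ[ℂ] Matrix n n ℂ) (v : n → ℂ) (i : n) :
    Φ (diagonal v) i i = ∑ j, v j * Φ (single j j 1) i i := by
  have hv : diagonal v = ∑ j, v j • single j j 1 := by
    simp only [smul_single, smul_eq_mul, mul_one, sum_single_eq_diagonal]
  simp only [hv, map_sum, map_smul, sum_apply, smul_apply, smul_eq_mul]

variable {Φ : Matrix n n ℂ →ₗ[ℂ] Matrix n n ℂ}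

lemma sum_diagTransition_row (hunital : Φ 1 = 1) (i : n) : ∑ j, diagTransition Φ i j = 1 := by
  have := congrArg Complex.re (linearMap_diagonal_apply_self Φ 1 i)
  simpa [diagTransition, diagonal_one, hunital, Complex.re_sum] using this.symm

lemma sum_diagTransition_col (htr : ∀ M : Matrix n n ℂ, (Φ M).trace = M.trace) (j : n) :
    ∑ i, diagTransition Φ i j = 1 := by
  have := congrArg Complex.re (htr (single j j 1))
  simpa [diagTransition, trace, Complex.re_sum] using this

lemma diagTransition_mulVec {p q : n → ℝ}
    (hpq : Φ (diagonal fun i => (p i : ℂ)) = diagonal fun i => (q i : ℂ)) :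
    q = diagTransition Φ *ᵥ p := by
  funext i
  have := congrArg Complex.re (linearMap_diagonal_apply_self Φ (fun i => (p i : ℂ)) i)
  simpa [hpq, Complex.re_sum, mulVec, dotProduct, mul_comm, diagTransition] using this

end Matrix

/-- Let `Φ` be a positive, trace-preserving, unital `ℂ`-linear map on
`d × d` complex matrices, and `p, q : Fin d → ℝ` with `Φ (diagonal p) = diagonal q`.
Then there is a doubly stochastic matrix `D` with `q = D *ᵥ p`. -/
theorem exists_doublyStochastic_of_unital_channel_diagonal
    {d : ℕ}
    (Φ : Matrix (Fin d) (Fin d) ℂ →ₗ[ℂ] Matrix (Fin d) (Fin d) ℂ)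
    (hpos : ∀ M : Matrix (Fin d) (Fin d) ℂ, M.PosSemidef → (Φ M).PosSemidef)
    (htr : ∀ M : Matrix (Fin d) (Fin d) ℂ, (Φ M).trace = M.trace)
    (hunital : Φ 1 = 1)
    (p q : Fin d → ℝ)
    (hpq : Φ (Matrix.diagonal fun i => (p i : ℂ)) = Matrix.diagonal fun i => (q i : ℂ)) :
    ∃ D : Matrix (Fin d) (Fin d) ℝ, IsDoublyStochastic D ∧ q = D *ᵥ p :=
  ⟨diagTransition Φ,
    ⟨diagTransition_nonneg hpos, sum_diagTransition_row hunital, sum_diagTransition_col htr⟩,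
    diagTransition_mulVec hpq⟩
end

section
/- Let D be a d × d doubly stochastic real matrix and p : Fin d → ℝ. Then there exist n ∈ ℕ, permutations σ₁, …, σ_n of Fin d, and nonnegative reals λ₁, …, λ_n with Σₖ λₖ = 1, such that Σₖ λₖ • (Pₖ * Matrix.diagonal p * Pₖᵀ) = Matrix.diagonal (D *ᵥ p), where Pₖ is the permutation matrix of σₖ (so Pₖᵀ = Pₖ⁻¹). -/
/-!
By Birkhoff's theorem `D = ∑ σ, w σ • Pσ` with convex weights `w`, hence
`D *ᵥ p = ∑ σ, w σ • (p ∘ σ)`. Conjugating `diagonal p` by a permutation matrix permutes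
its diagonal entries, so the same weights, with the permutations enumerated by `Fin n`,
give the required mixture.
-/

open Matrix

/-- The permutation matrix of `σ`, with entries `P i j = 1` if `i = σ j` and `0` otherwise. -/
def permMat {d : ℕ} (σ : Equiv.Perm (Fin d)) : Matrix (Fin d) (Fin d) ℝ :=
  Matrix.of fun i j => if i = σ j then 1 else 0

lemma permMatrix_mul_diagonal_mul_transpose {n R : Type*} [Fintype n] [DecidableEq n]
    [NonAssocSemiring R] (σ : Equiv.Perm n) (p : n → R) :
    σ.permMatrix R * diagonal p * (σ.permMatrix R)ᵀ = diagonal (p ∘ σ) := by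
  rw [transpose_permMatrix, PEquiv.toMatrix_toPEquiv_mul, PEquiv.mul_toMatrix_toPEquiv,
    submatrix_submatrix, Equiv.Perm.inv_def, Equiv.symm_symm]
  exact submatrix_diagonal_equiv p σ

lemma exists_mulVec_eq_sum_perm_of_mem_doublyStochastic {n R : Type*} [Fintype n] [DecidableEq n]
    [Field R] [LinearOrder R] [IsStrictOrderedRing R] {M : Matrix n n R}
    (hM : M ∈ doublyStochastic R n) :
    ∃ w : Equiv.Perm n → R, (∀ σ, 0 ≤ w σ) ∧ ∑ σ, w σ = 1 ∧
      ∀ v : n → R, M *ᵥ v = ∑ σ, w σ • (v ∘ σ) := by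
  obtain ⟨w, hw_nonneg, hw_sum, rfl⟩ := exists_eq_sum_perm_of_mem_doublyStochastic hM
  refine ⟨w, hw_nonneg, hw_sum, fun v => ?_⟩
  simp only [sum_mulVec, smul_mulVec, permMatrix_mulVec]

lemma permMat_eq_permMatrix_inv {d : ℕ} (σ : Equiv.Perm (Fin d)) :
    permMat σ = σ⁻¹.permMatrix ℝ := by
  ext i j
  simp [permMat, PEquiv.toMatrix_apply, Equiv.eq_symm_apply, eq_comm]

/-- Let `D` be doubly stochastic and `p : Fin d → ℝ`. Then there are
permutations `σ₁, …, σₙ` and convex weights `λ₁, …, λₙ` such that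
`Σₖ λₖ • (Pₖ * diagonal p * Pₖᵀ) = diagonal (D *ᵥ p)`, where `Pₖ` is the permutation
matrix of `σₖ` (so that `Pₖᵀ = Pₖ⁻¹`). -/
theorem diagonal_mulVec_eq_mix_of_permutation_conjugations
    {d : ℕ} (D : Matrix (Fin d) (Fin d) ℝ) (hD : IsDoublyStochastic D)
    (p : Fin d → ℝ) :
    ∃ (n : ℕ) (σ : Fin n → Equiv.Perm (Fin d)) (lam : Fin n → ℝ),
      (∀ k, 0 ≤ lam k) ∧ (∑ k, lam k = 1) ∧
      (∑ k, lam k • (permMat (σ k) * Matrix.diagonal p * (permMat (σ k))ᵀ))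
        = Matrix.diagonal (D *ᵥ p) := by
  obtain ⟨w, hw_nonneg, hw_sum, hD_mulVec⟩ :=
    exists_mulVec_eq_sum_perm_of_mem_doublyStochastic (mem_doublyStochastic_iff_sum.2 hD)
  let e := (Fintype.equivFin (Equiv.Perm (Fin d))).symm
  refine ⟨_, fun k => (e k)⁻¹, fun k => w (e k), fun k => hw_nonneg _, ?_, ?_⟩
  · rw [e.sum_comp w, hw_sum]
  · simp only [permMat_eq_permMatrix_inv, inv_inv, permMatrix_mul_diagonal_mul_transpose,
      hD_mulVec]
    rw [e.sum_comp fun σ => w σ • diagonal (p ∘ σ)]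
    simp only [← diagonal_smul]
    exact (map_sum (diagonalAddMonoidHom (Fin d) ℝ) _ _).symm
end

section
/- Let D be a d × d doubly stochastic real matrix and let p : Fin d → ℝ satisfy pᵢ ≥ 0 for all i. Then the Shannon entropy does not decrease under D: Σᵢ negMulLog((D *ᵥ p) i) ≥ Σᵢ negMulLog(p i), where negMulLog x = −x log x. -/
/-!
Each entry of `M *ᵥ x` is a convex combination of the `x j` (rows of `M` sum to `1`), so
Jensen bounds `f ((M *ᵥ x) i)` by `∑ j, M i j • f (x j)`; summing over `i`, the column sums `1`
give back `∑ j, f (x j)`. Hence `∑ i, f (x i)` is Schur-convex for convex `f`, and the Shannon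
entropy, a sum of the concave `negMulLog`, is Schur-concave.
-/

open Matrix

section SchurConvex

variable {𝕜 β n : Type*} [Field 𝕜] [LinearOrder 𝕜] [IsStrictOrderedRing 𝕜]
  [AddCommGroup β] [PartialOrder β] [IsOrderedAddMonoid β] [Module 𝕜 β]
  [IsStrictOrderedModule 𝕜 β] [Fintype n] [DecidableEq n]
  {s : Set 𝕜} {f : 𝕜 → β} {M : Matrix n n 𝕜} {x : n → 𝕜}

theorem ConvexOn.sum_map_mulVec_le_of_mem_doublyStochastic (hf : ConvexOn 𝕜 s f)
    (hM : M ∈ doublyStochastic 𝕜 n) (hx : ∀ i, x i ∈ s) :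
    ∑ i, f ((M *ᵥ x) i) ≤ ∑ i, f (x i) :=
  calc ∑ i, f ((M *ᵥ x) i)
      = ∑ i, f (∑ j, M i j • x j) := by simp only [mulVec, dotProduct, smul_eq_mul]
    _ ≤ ∑ i, ∑ j, M i j • f (x j) := Finset.sum_le_sum fun i _ ↦
        hf.map_sum_le (fun j _ ↦ nonneg_of_mem_doublyStochastic hM)
          (sum_row_of_mem_doublyStochastic hM i) fun j _ ↦ hx j
    _ = ∑ j, (∑ i, M i j) • f (x j) := by rw [Finset.sum_comm]; simp only [Finset.sum_smul]
    _ = ∑ j, f (x j) := by simp only [sum_col_of_mem_doublyStochastic hM, one_smul]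

theorem ConcaveOn.sum_map_le_sum_map_mulVec_of_mem_doublyStochastic (hf : ConcaveOn 𝕜 s f)
    (hM : M ∈ doublyStochastic 𝕜 n) (hx : ∀ i, x i ∈ s) :
    ∑ i, f (x i) ≤ ∑ i, f ((M *ᵥ x) i) :=
  ConvexOn.sum_map_mulVec_le_of_mem_doublyStochastic (β := βᵒᵈ) hf hM hx

end SchurConvex

theorem IsDoublyStochastic.mem_doublyStochastic {d : ℕ} {D : Matrix (Fin d) (Fin d) ℝ}
    (hD : IsDoublyStochastic D) : D ∈ doublyStochastic ℝ (Fin d) :=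
  mem_doublyStochastic_iff_sum.mpr hD

/-- Shannon entropy `H(p) = Σᵢ negMulLog pᵢ` does not decrease under a
doubly stochastic matrix: `H(D *ᵥ p) ≥ H(p)` whenever `p` has nonnegative entries. -/
theorem shannonEntropy_le_shannonEntropy_mulVec_doublyStochastic
    {d : ℕ} (D : Matrix (Fin d) (Fin d) ℝ) (hD : IsDoublyStochastic D)
    (p : Fin d → ℝ) (hp : ∀ i, 0 ≤ p i) :
    ∑ i, Real.negMulLog ((D *ᵥ p) i) ≥ ∑ i, Real.negMulLog (p i) :=
  Real.concaveOn_negMulLog.sum_map_le_sum_map_mulVec_of_mem_doublyStochastic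
    hD.mem_doublyStochastic fun i ↦ Set.mem_Ici.mpr (hp i)
end

section
/- Let D be a d × d doubly stochastic real matrix and let p : Fin d → ℝ be strictly decreasing (i < j implies p j < p i). If D *ᵥ p = p, then D is the identity matrix. -/
/-!
For a doubly stochastic `D`, the row and column sums give
`∑ i j, D i j * (p i - p j) ^ 2 = 2 * (p ⬝ᵥ p - p ⬝ᵥ D *ᵥ p)`. If `D *ᵥ p = p` this vanishes, so
every term does, and `D i j = 0` whenever `p i ≠ p j`. Thus any injective fixed vector, in
particular a strictly decreasing one, forces `D = 1`.
-/

open Matrix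

theorem isDoublyStochastic_iff_mem_doublyStochastic {d : ℕ} {D : Matrix (Fin d) (Fin d) ℝ} :
    IsDoublyStochastic D ↔ D ∈ doublyStochastic ℝ (Fin d) :=
  mem_doublyStochastic_iff_sum.symm

namespace Matrix

variable {R n : Type*} [Fintype n] [DecidableEq n]

theorem sum_mul_sub_sq_of_mem_doublyStochastic [CommRing R] [PartialOrder R] [IsOrderedRing R]
    {M : Matrix n n R} (hM : M ∈ doublyStochastic R n) (p : n → R) :
    ∑ i, ∑ j, M i j * (p i - p j) ^ 2 = 2 * (p ⬝ᵥ p - p ⬝ᵥ (M *ᵥ p)) := by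
  have hrow : ∑ i, ∑ j, M i j * p i ^ 2 = p ⬝ᵥ p := by
    simp only [← Finset.sum_mul, sum_row_of_mem_doublyStochastic hM, one_mul, dotProduct, sq]
  have hcol : ∑ i, ∑ j, M i j * p j ^ 2 = p ⬝ᵥ p := by
    rw [Finset.sum_comm]
    simp only [← Finset.sum_mul, sum_col_of_mem_doublyStochastic hM, one_mul, dotProduct, sq]
  have hcross : ∑ i, ∑ j, M i j * (p i * p j) = p ⬝ᵥ (M *ᵥ p) := by
    simp only [dotProduct, mulVec, Finset.mul_sum]
    exact Finset.sum_congr rfl fun i _ => Finset.sum_congr rfl fun j _ => by ring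
  calc ∑ i, ∑ j, M i j * (p i - p j) ^ 2
      = ∑ i, ∑ j, M i j * p i ^ 2 - 2 * ∑ i, ∑ j, M i j * (p i * p j)
          + ∑ i, ∑ j, M i j * p j ^ 2 := by
        simp only [Finset.mul_sum, ← Finset.sum_sub_distrib, ← Finset.sum_add_distrib]
        exact Finset.sum_congr rfl fun i _ => Finset.sum_congr rfl fun j _ => by ring
    _ = 2 * (p ⬝ᵥ p - p ⬝ᵥ (M *ᵥ p)) := by rw [hrow, hcol, hcross]; ring

theorem eq_one_of_mem_doublyStochastic_of_offDiag_eq_zero [Semiring R] [PartialOrder R]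
    [IsOrderedRing R] {M : Matrix n n R} (hM : M ∈ doublyStochastic R n)
    (hoff : ∀ i j, i ≠ j → M i j = 0) : M = 1 := by
  ext i j
  obtain rfl | hij := eq_or_ne i j
  · rw [one_apply_eq, ← sum_row_of_mem_doublyStochastic hM i,
      Finset.sum_eq_single_of_mem i (Finset.mem_univ i) fun j _ hj => hoff i j hj.symm]
  · rw [hoff i j hij, one_apply_ne hij]

theorem eq_one_of_mem_doublyStochastic_of_mulVec_eq [Field R] [LinearOrder R]
    [IsStrictOrderedRing R] {M : Matrix n n R} (hM : M ∈ doublyStochastic R n) {p : n → R}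
    (hp : Function.Injective p) (hfix : M *ᵥ p = p) : M = 1 := by
  have hsum : ∑ i, ∑ j, M i j * (p i - p j) ^ 2 = 0 := by
    rw [sum_mul_sub_sq_of_mem_doublyStochastic hM, hfix, sub_self, mul_zero]
  have hterm_nonneg : ∀ i j, 0 ≤ M i j * (p i - p j) ^ 2 := fun i j =>
    mul_nonneg (nonneg_of_mem_doublyStochastic hM) (sq_nonneg _)
  refine eq_one_of_mem_doublyStochastic_of_offDiag_eq_zero hM fun i j hij => ?_
  have hrow_zero : ∑ j, M i j * (p i - p j) ^ 2 = 0 :=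
    (Finset.sum_eq_zero_iff_of_nonneg fun i _ => Finset.sum_nonneg fun j _ => hterm_nonneg i j).1
      hsum i (Finset.mem_univ i)
  have hterm : M i j * (p i - p j) ^ 2 = 0 :=
    (Finset.sum_eq_zero_iff_of_nonneg fun j _ => hterm_nonneg i j).1 hrow_zero j (Finset.mem_univ j)
  have hsq : (p i - p j) ^ 2 ≠ 0 := pow_ne_zero 2 (sub_ne_zero.2 (hp.ne hij))
  exact (mul_eq_zero.1 hterm).resolve_right hsq

end Matrix

/-- If a doubly stochastic matrix `D` fixes a strictly decreasing vector
`p` (i.e. `D *ᵥ p = p`), then `D` is the identity matrix. -/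
theorem doublyStochastic_eq_one_of_fixes_strictAnti
    {d : ℕ} (D : Matrix (Fin d) (Fin d) ℝ) (hD : IsDoublyStochastic D)
    (p : Fin d → ℝ) (hp : StrictAnti p) (hfix : D *ᵥ p = p) :
    D = 1 :=
  eq_one_of_mem_doublyStochastic_of_mulVec_eq (isDoublyStochastic_iff_mem_doublyStochastic.1 hD)
    hp.injective hfix
end

section
/- Split ℂ⁴ into the two sectors H₀ = span{e₀, e₁} and H₁ = span{e₂, e₃}. Call a 4 × 4 complex matrix M sector-block-diagonal if M i j = 0 whenever exactly one of the indices i, j belongs to {0, 1}. Call a 4 × 4 complex unitary U an allowed Doubled-Quantum-Theory unitary if conjugation by U preserves sector-block-diagonality, i.e. U M U* is sector-block-diagonal for every sector-block-diagonal M. Let ρ = (1/2)(E₀₀ + E₁₁) and σ = (1/2)(E₀₀ + E₂₂), where Eᵢᵢ is the standard basis matrix with a single 1 in position (i,i). Then there is no allowed Doubled-Quantum-Theory unitary U with U ρ U* = σ. -/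
open Matrix

/-- A `4 × 4` complex matrix is sector-block-diagonal (with respect to the split of `ℂ⁴`
into the sectors `H₀ = span{e₀, e₁}` and `H₁ = span{e₂, e₃}`) if its `(i, j)` entry
vanishes whenever exactly one of `i, j` belongs to `{0, 1}`. -/
def SectorBlockDiagonal (M : Matrix (Fin 4) (Fin 4) ℂ) : Prop :=
  ∀ i j : Fin 4, ¬ ((i : ℕ) < 2 ↔ (j : ℕ) < 2) → M i j = 0

/-!
Conjugation by `U` is a `⋆`-algebra automorphism `φ` of `M₄(ℂ)` with `φ(E₀₀ + E₁₁) = E₀₀ + E₂₂`.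
The off-diagonal unit `E₀₁` of the sector `H₀` is sector-block-diagonal, square-zero and
absorbed by `E₀₀ + E₁₁` on both sides, so `N = φ(E₀₁)` is sector-block-diagonal, square-zero
and compressed by `E₀₀ + E₂₂` on both sides. The compression confines `N` to the rows and
columns `{0, 2}`, and since `0` and `2` lie in different sectors, `N` is diagonal. A diagonal
square-zero matrix vanishes, contradicting the injectivity of `φ`.
-/

theorem Matrix.IsDiag.eq_zero_of_mul_self_eq_zero {n α : Type*} [Fintype n] [DecidableEq n]
    [Semiring α] [NoZeroDivisors α] {A : Matrix n n α} (hA : A.IsDiag) (hsq : A * A = 0) :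
    A = 0 := by
  rw [← hA.diagonal_diag, diagonal_mul_diagonal, diagonal_eq_zero] at hsq
  rw [← hA.diagonal_diag, diagonal_eq_zero]
  funext i
  exact mul_self_eq_zero.1 (congrFun hsq i)

theorem sectorBlockDiagonal_single_zero_one : SectorBlockDiagonal (single 0 1 1) := by
  intro i j hij
  rw [single_apply_of_ne]
  rintro ⟨rfl, rfl⟩
  exact hij (by decide)

theorem SectorBlockDiagonal.isDiag_of_compress_eq {N : Matrix (Fin 4) (Fin 4) ℂ}
    (hN : SectorBlockDiagonal N)
    (hcompress : (single 0 0 1 + single 2 2 1) * N * (single 0 0 1 + single 2 2 1) = N) :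
    N.IsDiag := by
  have hdiagonal : (single 0 0 1 + single 2 2 1 : Matrix (Fin 4) (Fin 4) ℂ) =
      diagonal ![1, 0, 1, 0] := by
    ext i j
    fin_cases i <;> fin_cases j <;> simp
  intro i j hij
  rw [← hcompress, hdiagonal, mul_diagonal, diagonal_mul]
  fin_cases i <;> fin_cases j <;>
    first
      | exact absurd rfl hij
      | simp [hN 0 2 (by decide), hN 2 0 (by decide)]

/-- Let `ρ = (1/2)(E₀₀ + E₁₁)` and `σ = (1/2)(E₀₀ + E₂₂)`. There is no
allowed Doubled-Quantum-Theory unitary `U` (a `4 × 4` unitary whose conjugation action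
preserves sector-block-diagonality) with `U ρ U* = σ`. -/
theorem no_doubled_quantum_unitary_maps_rho_to_sigma :
    ¬ ∃ U : Matrix (Fin 4) (Fin 4) ℂ,
        U ∈ Matrix.unitaryGroup (Fin 4) ℂ ∧
        (∀ M : Matrix (Fin 4) (Fin 4) ℂ,
          SectorBlockDiagonal M → SectorBlockDiagonal (U * M * Uᴴ)) ∧
        U * ((1 / 2 : ℂ) •
              (Matrix.single (0 : Fin 4) (0 : Fin 4) 1 +
               Matrix.single (1 : Fin 4) (1 : Fin 4) 1)) * Uᴴ
          = (1 / 2 : ℂ) •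
              (Matrix.single (0 : Fin 4) (0 : Fin 4) 1 +
               Matrix.single (2 : Fin 4) (2 : Fin 4) 1) := by
  rintro ⟨U, hU, hpres, hmap⟩
  let φ := Unitary.conjStarAlgAut ℂ (Matrix (Fin 4) (Fin 4) ℂ) ⟨U, hU⟩
  change φ _ = _ at hmap
  rw [map_smul] at hmap
  have hφ : φ (single 0 0 1 + single 1 1 1) = single 0 0 1 + single 2 2 1 :=
    smul_right_injective _ (by norm_num) hmap
  have hcompress : (single 0 0 1 + single 2 2 1) * φ (single 0 1 1) *
      (single 0 0 1 + single 2 2 1) = φ (single 0 1 1) := by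
    rw [← hφ, ← map_mul, ← map_mul]
    simp [add_mul, mul_add, single_mul_single_of_ne]
  have hdiag : (φ (single 0 1 1)).IsDiag :=
    (hpres _ sectorBlockDiagonal_single_zero_one).isDiag_of_compress_eq hcompress
  have hsq : φ (single 0 1 1) * φ (single 0 1 1) = 0 := by
    rw [← map_mul]
    simp [single_mul_single_of_ne]
  have hzero : (single 0 1 1 : Matrix (Fin 4) (Fin 4) ℂ) = 0 :=
    (map_eq_zero_iff φ φ.injective).1 (hdiag.eq_zero_of_mul_self_eq_zero hsq)
  simpa using congrFun (congrFun hzero 0) 1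
end

section
/- Split ℂ⁴ into the two sectors H₀ = span{e₀, e₁} and H₁ = span{e₂, e₃}, and call a 4 × 4 complex matrix M sector-block-diagonal if M i j = 0 whenever exactly one of i, j belongs to {0, 1}. Consider matrices on ℂ⁴ ⊗ ℂ⁴ indexed by (Fin 4) × (Fin 4), and let E be the standard basis matrix with a single 1 in position ((0,0), (2,2)). Then: (a) every entry of E at a pair of indices ((i,k), (j,l)) with (i,k) in the composite even sector {(i,k) : (i ∈ {0,1} ∧ k ∈ {0,1}) ∨ (i ∈ {2,3} ∧ k ∈ {2,3})} and (j,l) outside it, or vice versa, is zero; and (b) E does not belong to the ℂ-linear span of the Kronecker products {M ⊗ N : M, N sector-block-diagonal 4 × 4 matrices}. -/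
open Matrix
open scoped Kronecker

/-- A composite index `(i, k)` lies in the composite even sector if either both `i` and `k`
belong to `{0, 1}` or both belong to `{2, 3}`. -/
def CompositeEven (x : Fin 4 × Fin 4) : Prop :=
  ((x.1 : ℕ) < 2 ∧ (x.2 : ℕ) < 2) ∨ (¬ (x.1 : ℕ) < 2 ∧ ¬ (x.2 : ℕ) < 2)

/-! Each product `M ⊗ₖ N` of sector-block-diagonal matrices has entry `M 0 2 * N 0 2 = 0` at
`((0,0), (2,2))`. Reading off that entry is linear, so it vanishes on the whole span, whereas
`E` has a `1` there. -/

namespace Matrix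

variable {m n p q α R : Type*}

theorem single_apply_eq_zero_of_not_iff [DecidableEq m] [DecidableEq n] [Zero α]
    {P : m → Prop} {Q : n → Prop} {a x : m} {b y : n} (c : α) (ha : P a) (hb : Q b)
    (h : ¬ (P x ↔ Q y)) : single a b c x y = 0 :=
  single_apply_of_ne a b c x y fun ⟨hax, hby⟩ ↦ h (by subst hax hby; exact iff_of_true ha hb)

theorem apply_eq_zero_of_mem_span [Semiring R] [AddCommMonoid α] [Module R α]
    {s : Set (Matrix m n α)} {i : m} {j : n} (hs : ∀ X ∈ s, X i j = 0) {X : Matrix m n α}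
    (hX : X ∈ Submodule.span R s) : X i j = 0 :=
  (Submodule.span_le (p := LinearMap.ker (entryLinearMap R α i j))).2 hs hX

theorem kronecker_apply_eq_zero_of_left [MulZeroClass α] {M : Matrix m n α}
    {i : m} {j : n} (h : M i j = 0) (N : Matrix p q α) (k : p) (l : q) :
    (M ⊗ₖ N) (i, k) (j, l) = 0 := by
  rw [kronecker_apply, h, zero_mul]

end Matrix

theorem compositeEven_zero_zero : CompositeEven (0, 0) := Or.inl (by decide)

theorem compositeEven_two_two : CompositeEven (2, 2) := Or.inr (by decide)

theorem SectorBlockDiagonal.apply_zero_two {M : Matrix (Fin 4) (Fin 4) ℂ}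
    (hM : SectorBlockDiagonal M) : M 0 2 = 0 :=
  hM 0 2 (by decide)

/-- Let `E` be the standard basis matrix on `ℂ⁴ ⊗ ℂ⁴` with a single `1`
in position `((0,0), (2,2))`. Then (a) every entry of `E` connecting the composite even
sector to its complement vanishes, and (b) `E` does not lie in the `ℂ`-span of Kronecker
products of sector-block-diagonal matrices. -/
theorem doubled_quantum_violates_local_tomography :
    (∀ i k j l : Fin 4,
        (CompositeEven (i, k) ∧ ¬ CompositeEven (j, l)) ∨
          (¬ CompositeEven (i, k) ∧ CompositeEven (j, l)) →
        Matrix.single (((0 : Fin 4), (0 : Fin 4)))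
            (((2 : Fin 4), (2 : Fin 4))) (1 : ℂ) (i, k) (j, l) = 0) ∧
    Matrix.single (((0 : Fin 4), (0 : Fin 4))) (((2 : Fin 4), (2 : Fin 4))) (1 : ℂ)
      ∉ Submodule.span ℂ
          {X : Matrix (Fin 4 × Fin 4) (Fin 4 × Fin 4) ℂ |
            ∃ M N : Matrix (Fin 4) (Fin 4) ℂ,
              SectorBlockDiagonal M ∧ SectorBlockDiagonal N ∧ X = M ⊗ₖ N} := by
  refine ⟨fun i k j l h ↦
    single_apply_eq_zero_of_not_iff 1 compositeEven_zero_zero compositeEven_two_two (by tauto),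
    fun hE ↦ ?_⟩
  have hentry := apply_eq_zero_of_mem_span (i := ((0 : Fin 4), (0 : Fin 4))) (j := (2, 2)) ?_ hE
  · simp at hentry
  · rintro _ ⟨M, N, hM, -, rfl⟩
    exact kronecker_apply_eq_zero_of_left hM.apply_zero_two N 0 2
end
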